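/- Wold decomposition of W₋(U₁,U₀): let ℋ₀₀ = closed span{δ_{x,j} : x ≤ -j-1} and for each x ∈ ℤ let ℋ_x = closed span{δ_{x,j} : j ≥ max(-x,0)}. Then ℓ²(ℤ×ℕ) is the orthogonal direct sum of ℋ₀₀ and the ℋ_x (x ∈ ℤ), each of these subspaces is invariant under W₋, the restriction of W₋ to ℋ₀₀ is the identity, and for each x the restriction of W₋ to ℋ_x is unitarily equivalent to the unilateral shift S on ℓ²(ℕ). -/

import Mathlib

noncomputable section

abbrev H : Type := lp (fun _ : ℤ × ℕ => ℂ) 2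

noncomputable def δ (x : ℤ) (j : ℕ) : H := lp.single 2 (x, j) 1

/-- The subspaces of the Wold decomposition of W₋(U₁,U₀):
`none` indexes ℋ₀₀ = closed span{δ_{x,j} : x ≤ -j-1}, and `some x` indexes
ℋ_x = closed span{δ_{x,j} : j ≥ max(-x,0)}. -/
noncomputable def woldSub : Option ℤ → Submodule ℂ H
  | none => (Submodule.span ℂ
      {v : H | ∃ (x : ℤ) (j : ℕ), x ≤ -(j : ℤ) - 1 ∧ v = δ x j}).topologicalClosure
  | some x => (Submodule.span ℂ
      {v : H | ∃ j : ℕ, max (-x) 0 ≤ (j : ℤ) ∧ v = δ x j}).topologicalClosure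

open Submodule

/-- The generating sets. -/
def gens : Option ℤ → Set H
  | none => {v : H | ∃ (x : ℤ) (j : ℕ), x ≤ -(j : ℤ) - 1 ∧ v = δ x j}
  | some x => {v : H | ∃ j : ℕ, max (-x) 0 ≤ (j : ℤ) ∧ v = δ x j}

lemma woldSub_eq (i : Option ℤ) :
    woldSub i = (Submodule.span ℂ (gens i)).topologicalClosure := by
  cases i <;> rfl

set_option maxRecDepth 8000
set_option maxHeartbeats 1000000

lemma delta_apply (x : ℤ) (j : ℕ) (p : ℤ × ℕ) :
    (δ x j : ∀ _ : ℤ × ℕ, ℂ) p = if p = (x, j) then 1 else 0 := by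
  classical
  by_cases h : p = (x, j)
  · rw [if_pos h, δ, h, lp.single_apply_self]
  · rw [if_neg h, δ, lp.single_apply_ne _ _ _ h]

lemma inner_delta (x y : ℤ) (j k : ℕ) :
    (inner ℂ (δ x j) (δ y k) : ℂ) = if (x, j) = (y, k) then 1 else 0 := by
  classical
  rw [δ, lp.inner_single_left]
  simp [delta_apply, RCLike.inner_apply]

/-- A continuous linear functional vanishing on a set vanishes on the closure of its span. -/
lemma clm_vanish {T : H →L[ℂ] ℂ} {s : Set H} (h : ∀ v ∈ s, T v = 0)
    {f : H} (hf : f ∈ (Submodule.span ℂ s).topologicalClosure) : T f = 0 := by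
  have hle : (Submodule.span ℂ s).topologicalClosure ≤ LinearMap.ker (T : H →ₗ[ℂ] ℂ) :=
    Submodule.topologicalClosure_minimal _ (Submodule.span_le (p := LinearMap.ker (T : H →ₗ[ℂ] ℂ)).2 fun v hv => h v hv)
      (ContinuousLinearMap.isClosed_ker T)
  exact hle hf

lemma single_eq_smul (p : ℤ × ℕ) (c : ℂ) :
    (lp.single 2 p c : H) = c • lp.single 2 p 1 := by
  have := lp.single_smul (E := fun _ : ℤ × ℕ => ℂ) 2 p c (1 : ℂ)
  rw [← this, smul_eq_mul, mul_one]

/-- Every element of `H` lies in the closure of the span of all deltas. -/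
lemma mem_closure_span_deltas (f : H) :
    f ∈ closure ((Submodule.span ℂ {v : H | ∃ x j, v = δ x j} : Submodule ℂ H) : Set H) := by
  have h : HasSum (fun p : ℤ × ℕ => (lp.single 2 p (f p) : H)) f :=
    lp.hasSum_single ENNReal.ofNat_ne_top f
  refine mem_closure_of_tendsto h (Filter.Eventually.of_forall fun t => ?_)
  refine Submodule.sum_mem _ fun p _ => ?_
  rw [single_eq_smul]
  exact Submodule.smul_mem _ _ (Submodule.subset_span ⟨p.1, p.2, rfl⟩)

theorem wold_decomposition_of_Wminus (W : H →ₗᵢ[ℂ] H)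
    (hWa : ∀ (x : ℤ) (j : ℕ), -(j : ℤ) ≤ x → W (δ x j) = δ x (j + 1))
    (hWb : ∀ (x : ℤ) (j : ℕ), x ≤ -(j : ℤ) - 1 → W (δ x j) = δ x j) :
    OrthogonalFamily ℂ (fun i => ↥(woldSub i)) (fun i => (woldSub i).subtypeₗᵢ) ∧
    (⨆ i, woldSub i).topologicalClosure = ⊤ ∧
    (∀ i, ∀ f ∈ woldSub i, W f ∈ woldSub i) ∧
    (∀ f ∈ woldSub none, W f = f) ∧
    (∀ x : ℤ, ∃ e : ↥(woldSub (some x)) ≃ₗᵢ[ℂ] lp (fun _ : ℕ => ℂ) 2,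
      ∀ v w : ↥(woldSub (some x)), (w : H) = W (v : H) →
        ((e w : ∀ _ : ℕ, ℂ) 0 = 0 ∧
         ∀ n : ℕ, (e w : ∀ _ : ℕ, ℂ) (n + 1) = (e v : ∀ _ : ℕ, ℂ) n)) := by
  classical
  -- points of generators in different pieces are distinct
  have hgen_ne : ∀ i i', i ≠ i' → ∀ u ∈ gens i, ∀ u' ∈ gens i',
      (inner ℂ u u' : ℂ) = 0 := by
    rintro i i' hii u hu u' hu'
    have : ∀ (x y : ℤ) (j k : ℕ), (x, j) ≠ (y, k) →
        (inner ℂ (δ x j) (δ y k) : ℂ) = 0 := by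
      intro x y j k hne
      rw [inner_delta, if_neg hne]
    match i, i' with
    | none, none => exact absurd rfl hii
    | none, some y =>
      obtain ⟨x, j, hxj, rfl⟩ := hu
      obtain ⟨k, hk, rfl⟩ := hu'
      refine this _ _ _ _ ?_
      rintro ⟨rfl, rfl⟩
      have : -(j : ℤ) ≤ y := by have := le_max_left (-y) 0; omega
      omega
    | some y, none =>
      obtain ⟨k, hk, rfl⟩ := hu
      obtain ⟨x, j, hxj, rfl⟩ := hu'
      refine this _ _ _ _ ?_
      rintro ⟨rfl, rfl⟩
      have : -(k : ℤ) ≤ y := by have := le_max_left (-y) 0; omega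
      omega
    | some y, some y' =>
      obtain ⟨k, hk, rfl⟩ := hu
      obtain ⟨k', hk', rfl⟩ := hu'
      refine this _ _ _ _ ?_
      rintro ⟨rfl, -⟩
      exact hii rfl
  -- orthogonality of subspaces
  have horth : ∀ i i', i ≠ i' → ∀ f ∈ woldSub i, ∀ g ∈ woldSub i',
      (inner ℂ f g : ℂ) = 0 := by
    intro i i' hii f hf g hg
    rw [woldSub_eq] at hf hg
    have step1 : ∀ u ∈ gens i, (inner ℂ u g : ℂ) = 0 := by
      intro u hu
      exact clm_vanish (T := innerSL ℂ u) (fun u' hu' => hgen_ne i i' hii u hu u' hu') hg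
    have step2 : (inner ℂ g f : ℂ) = 0 := by
      refine clm_vanish (T := innerSL ℂ g) (fun u hu => ?_) hf
      simp only [innerSL_apply_apply]
      rw [← inner_conj_symm g u, step1 u hu, map_zero]
    rw [← inner_conj_symm f g, step2, map_zero]
  refine ⟨?_, ?_, ?_, ?_, ?_⟩
  · -- orthogonal family
    intro i j hij v w
    exact horth i j hij v v.2 w w.2
  · -- density
    rw [eq_top_iff]
    intro f _
    have h1 : (Submodule.span ℂ {v : H | ∃ x j, v = δ x j}) ≤ ⨆ i, woldSub i := by
      rw [Submodule.span_le]
      rintro v ⟨x, j, rfl⟩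
      by_cases hx : x ≤ -(j : ℤ) - 1
      · exact Submodule.mem_iSup_of_mem none
          ((woldSub_eq none ▸ Submodule.le_topologicalClosure _)
            (Submodule.subset_span ⟨x, j, hx, rfl⟩))
      · refine Submodule.mem_iSup_of_mem (some x)
          ((woldSub_eq (some x) ▸ Submodule.le_topologicalClosure _)
            (Submodule.subset_span ⟨j, ?_, rfl⟩))
        simp only [max_le_iff]
        omega
    have := mem_closure_span_deltas f
    rw [← SetLike.mem_coe, Submodule.topologicalClosure_coe]
    exact closure_mono h1 this
  · -- invariance
    intro i f hf
    rw [woldSub_eq] at hf ⊢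
    have hgen : ∀ u ∈ gens i, W u ∈ Submodule.span ℂ (gens i) := by
      intro u hu
      match i with
      | none =>
        obtain ⟨x, j, hxj, rfl⟩ := hu
        rw [hWb x j hxj]
        exact Submodule.subset_span ⟨x, j, hxj, rfl⟩
      | some y =>
        obtain ⟨k, hk, rfl⟩ := hu
        rw [hWa y k (by simp only [max_le_iff] at hk; omega)]
        exact Submodule.subset_span ⟨k + 1, by push_cast; simp only [max_le_iff] at hk ⊢; omega, rfl⟩
    have hmaps : Set.MapsTo W (Submodule.span ℂ (gens i) : Set H)
        (Submodule.span ℂ (gens i) : Set H) := by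
      intro y hy
      refine Submodule.span_induction (fun u hu => hgen u hu) (by simp) ?_ ?_ hy
      · intro a b _ _ ha hb
        rw [map_add]; exact Submodule.add_mem _ ha hb
      · intro c a _ ha
        rw [map_smul]; exact Submodule.smul_mem _ _ ha
    rw [← SetLike.mem_coe, Submodule.topologicalClosure_coe] at hf ⊢
    exact map_mem_closure W.continuous hf hmaps
  · -- identity on ℋ₀₀
    intro f hf
    rw [woldSub_eq] at hf
    have hle : (Submodule.span ℂ (gens none)).topologicalClosure ≤
        LinearMap.ker ((W.toContinuousLinearMap - ContinuousLinearMap.id ℂ H : H →L[ℂ] H) : H →ₗ[ℂ] H) := by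
      refine Submodule.topologicalClosure_minimal _ (Submodule.span_le.2 ?_)
        (ContinuousLinearMap.isClosed_ker _)
      rintro v ⟨x, j, hxj, rfl⟩
      simp only [SetLike.mem_coe, LinearMap.mem_ker, ContinuousLinearMap.coe_coe, ContinuousLinearMap.coe_sub',
        Pi.sub_apply, ContinuousLinearMap.coe_id', id_eq]
      rw [LinearIsometry.coe_toContinuousLinearMap, hWb x j hxj, sub_self]
    have := hle hf
    simp only [LinearMap.mem_ker, ContinuousLinearMap.coe_coe, ContinuousLinearMap.coe_sub', Pi.sub_apply,
      ContinuousLinearMap.coe_id', id_eq, LinearIsometry.coe_toContinuousLinearMap,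
      sub_eq_zero] at this
    exact this
  · -- shift part
    intro x
    set m : ℕ := (max (-x) 0).toNat with hm
    have hmz : (m : ℤ) = max (-x) 0 := Int.toNat_of_nonneg (le_max_right _ _)
    clear_value m
    have hmem : ∀ n : ℕ, δ x (m + n) ∈ woldSub (some x) := by
      intro n
      rw [woldSub_eq]
      exact Submodule.le_topologicalClosure _
        (Submodule.subset_span ⟨m + n, by push_cast; omega, rfl⟩)
    set v : ℕ → ↥(woldSub (some x)) := fun n => ⟨δ x (m + n), hmem n⟩ with hv
    have hon : Orthonormal ℂ v := by
      rw [orthonormal_iff_ite]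
      intro a b
      have : (inner ℂ (v a) (v b) : ℂ) = inner ℂ (δ x (m + a)) (δ x (m + b)) :=
        Submodule.coe_inner _ _ _
      rw [this, inner_delta]
      by_cases hab : a = b
      · simp [hab]
      · rw [if_neg (by simp [hab]), if_neg hab]
    have hsp : ⊤ ≤ (Submodule.span ℂ (Set.range v)).topologicalClosure := by
      intro y _
      rw [← SetLike.mem_coe, Submodule.topologicalClosure_coe, closure_subtype]
      have himg0 : Submodule.map (woldSub (some x)).subtype
          (Submodule.span ℂ (Set.range v)) = Submodule.span ℂ (gens (some x)) := by
        rw [Submodule.map_span]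
        congr 1
        ext u
        constructor
        · rintro ⟨-, ⟨n, rfl⟩, rfl⟩
          exact ⟨m + n, by push_cast; omega, rfl⟩
        · rintro ⟨j, hj, rfl⟩
          refine ⟨v (j - m), ⟨j - m, rfl⟩, ?_⟩
          have hmj : m ≤ j := by
            exact_mod_cast (hmz.le.trans hj)
          simp only [hv, Submodule.coe_subtype]
          rw [Nat.add_sub_cancel' hmj]
      have himg : (Subtype.val '' ((Submodule.span ℂ (Set.range v) :
          Submodule ℂ ↥(woldSub (some x))) : Set ↥(woldSub (some x)))) =
          ((Submodule.span ℂ (gens (some x)) : Submodule ℂ H) : Set H) := by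
        rw [show (Subtype.val : ↥(woldSub (some x)) → H) =
          ⇑((woldSub (some x)).subtype) from rfl, ← Submodule.map_coe, himg0]
      rw [himg]
      have h2 : (y : H) ∈ (Submodule.span ℂ (gens (some x))).topologicalClosure :=
        (le_of_eq (woldSub_eq (some x))) y.2
      rw [← SetLike.mem_coe, Submodule.topologicalClosure_coe] at h2
      exact h2
    haveI : CompleteSpace ↥(woldSub (some x)) := by
      rw [woldSub_eq]
      exact (Submodule.isClosed_topologicalClosure _).completeSpace_coe
    set b : HilbertBasis ℕ ℂ ↥(woldSub (some x)) := HilbertBasis.mk hon hsp with hb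
    refine ⟨b.repr, ?_⟩
    rintro v0 w0 hw0
    have hbv : ⇑b = v := HilbertBasis.coe_mk hon hsp
    have hv0 : (v0 : H) ∈ (Submodule.span ℂ (gens (some x))).topologicalClosure :=
      (le_of_eq (woldSub_eq (some x))) v0.2
    have hrepr : ∀ (u : ↥(woldSub (some x))) (n : ℕ),
        (b.repr u : ∀ _ : ℕ, ℂ) n = (inner ℂ (δ x (m + n)) (u : H) : ℂ) := by
      intro u n
      rw [b.repr_apply_apply, hbv]
      exact Submodule.coe_inner _ _ _
    constructor
    · rw [hrepr w0 0, hw0]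
      refine clm_vanish (T := (innerSL ℂ (δ x (m + 0))).comp W.toContinuousLinearMap)
        (fun u hu => ?_) hv0
      obtain ⟨j, hj, rfl⟩ := hu
      have hmj : m ≤ j := by exact_mod_cast (hmz.le.trans hj)
      simp only [ContinuousLinearMap.coe_comp', Function.comp_apply,
        LinearIsometry.coe_toContinuousLinearMap, innerSL_apply_apply]
      rw [hWa x j (by simp only [max_le_iff] at hj; omega), inner_delta]
      rw [if_neg (by simp only [Prod.mk.injEq]; omega)]
    · intro n
      rw [hrepr w0 (n + 1), hrepr v0 n, hw0]
      have : ((innerSL ℂ (δ x (m + (n + 1)))).comp W.toContinuousLinearMap -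
          innerSL ℂ (δ x (m + n))) (v0 : H) = 0 := by
        refine clm_vanish (fun u hu => ?_) hv0
        obtain ⟨j, hj, rfl⟩ := hu
        have hmj : m ≤ j := by exact_mod_cast (hmz.le.trans hj)
        simp only [ContinuousLinearMap.coe_sub', Pi.sub_apply,
          ContinuousLinearMap.coe_comp', Function.comp_apply,
          LinearIsometry.coe_toContinuousLinearMap, innerSL_apply_apply]
        rw [hWa x j (by simp only [max_le_iff] at hj; omega), inner_delta, inner_delta]
        rw [sub_eq_zero]
        by_cases hcase : j = m + n
        · rw [if_pos (by simp only [Prod.mk.injEq]; exact ⟨trivial, by omega⟩),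
            if_pos (by simp only [Prod.mk.injEq]; exact ⟨trivial, by omega⟩)]
        · rw [if_neg (by simp only [Prod.mk.injEq]; omega),
            if_neg (by simp only [Prod.mk.injEq]; omega)]
      simpa only [ContinuousLinearMap.coe_sub', Pi.sub_apply,
        ContinuousLinearMap.coe_comp', Function.comp_apply,
        LinearIsometry.coe_toContinuousLinearMap, innerSL_apply_apply, sub_eq_zero] using this
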